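/- Generalized policy improvement lower bound over M prior policies: for prior policies π_{k-i}, i = 0,…,M-1 (with π_{k-0} = π_k being the current policy), any distribution ν over {0,…,M-1}, and any future policy π with supp π(·|s) ⊆ supp π_{k-i}(·|s) for all s, i: J(π) - J(π_k) ≥ (1/(1-γ)) E_{i∼ν} E_{(s,a)∼d^{π_{k-i}}}[(π(a|s)/π_{k-i}(a|s)) A^{π_k}(s,a)] - (2γ C^{π,π_k}/(1-γ)^2) E_{i∼ν} E_{s∼d^{π_{k-i}}}[TV(π, π_{k-i})(s)]. -/

import Mathlib

open scoped BigOperators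

/-- A finite Markov decision process. -/
structure MDP (S A : Type*) [Fintype S] [Fintype A] where
  p : S → A → S → ℝ
  p_nonneg : ∀ s a s', 0 ≤ p s a s'
  p_sum : ∀ s a, ∑ s', p s a s' = 1
  r : S → A → ℝ
  ρ0 : S → ℝ
  ρ0_nonneg : ∀ s, 0 ≤ ρ0 s
  ρ0_sum : ∑ s, ρ0 s = 1
  γ : ℝ
  γ_pos : 0 < γ
  γ_lt_one : γ < 1

variable {S A : Type*} [Fintype S] [Fintype A]

/-- A (stationary stochastic) policy: a probability distribution over actions at every state. -/
noncomputable def IsPolicy (π : S → A → ℝ) : Prop :=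
  (∀ s a, 0 ≤ π s a) ∧ ∀ s, ∑ a, π s a = 1

/-- The state occupancy distribution at time `t`, starting from initial distribution `μ`. -/
noncomputable def stateDistFrom (M : MDP S A) (π : S → A → ℝ) (μ : S → ℝ) : ℕ → S → ℝ
  | 0 => μ
  | t + 1 => fun s' => ∑ s, ∑ a, stateDistFrom M π μ t s * π s a * M.p s a s'

/-- The normalized discounted state visitation distribution, starting from `μ`. -/
noncomputable def visitFrom (M : MDP S A) (π : S → A → ℝ) (μ : S → ℝ) (s : S) : ℝ :=
  (1 - M.γ) * ∑' t, M.γ ^ t * stateDistFrom M π μ t s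

/-- The normalized discounted state visitation distribution `d^π`. -/
noncomputable def visit (M : MDP S A) (π : S → A → ℝ) (s : S) : ℝ :=
  visitFrom M π M.ρ0 s

/-- Expected total discounted reward starting from initial distribution `μ`. -/
noncomputable def Jfrom (M : MDP S A) (π : S → A → ℝ) (μ : S → ℝ) : ℝ :=
  ∑' t, M.γ ^ t * ∑ s, ∑ a, stateDistFrom M π μ t s * π s a * M.r s a

/-- The performance objective `J(π)`. -/
noncomputable def Jval (M : MDP S A) (π : S → A → ℝ) : ℝ :=
  Jfrom M π M.ρ0

/-- The state value function `V^π(s)`. -/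
noncomputable def Vval [DecidableEq S] (M : MDP S A) (π : S → A → ℝ) (s : S) : ℝ :=
  Jfrom M π (fun s' => if s' = s then 1 else 0)

/-- The state-action value function `Q^π(s,a)`. -/
noncomputable def Qval [DecidableEq S] (M : MDP S A) (π : S → A → ℝ) (s : S) (a : A) : ℝ :=
  M.r s a + M.γ * ∑ s', M.p s a s' * Vval M π s'

/-- The advantage function `A^π(s,a) = Q^π(s,a) - V^π(s)`. -/
noncomputable def Adv [DecidableEq S] (M : MDP S A) (π : S → A → ℝ) (s : S) (a : A) : ℝ :=
  Qval M π s a - Vval M π s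

/-- Total variation distance between the action distributions of two policies at state `s`. -/
noncomputable def tvPol (π π' : S → A → ℝ) (s : S) : ℝ :=
  (1 / 2) * ∑ a, |π s a - π' s a|

/-!
The performance difference lemma writes `J(π) - J(π_k)` as `∑ s, d^π(s) Ā(s)`, where `d^π` is the
unnormalised discounted occupancy and `Ā(s) = E_{a∼π(·|s)} A^{π_k}(s,a)`. Replacing `d^π` by the
occupancy of a reference policy `π'` costs at most `C · ‖d^π - d^{π'}‖₁`, and subtracting the flow
equations `d = μ + γ P_πᵀ d` of the two policies gives
`(1 - γ) ‖d^π - d^{π'}‖₁ ≤ γ ∑ s, d^{π'}(s) ‖π(·|s) - π'(·|s)‖₁ = 2γ E_{d^{π'}}[TV]`.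
Under the support condition, `E_{d^{π'}}[Ā]` is the importance-weighted expectation under `π'`,
and the bounds for the individual `π_{k-i}` are averaged with the weights `ν`.
-/

open Finset

def IsDist (μ : S → ℝ) : Prop :=
  (∀ s, 0 ≤ μ s) ∧ ∑ s, μ s = 1

theorem isDist_dirac [DecidableEq S] (s₀ : S) : IsDist fun s => if s = s₀ then (1 : ℝ) else 0 :=
  ⟨fun s => by by_cases h : s = s₀ <;> simp [h], by simp⟩

theorem IsDist.le_one {μ : S → ℝ} (hμ : IsDist μ) (s : S) : μ s ≤ 1 :=
  hμ.2 ▸ single_le_sum (fun s _ => hμ.1 s) (mem_univ s)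

theorem MDP.sum_sum_sum_mul_p (M : MDP S A) (f : S → A → ℝ) :
    ∑ s', ∑ s, ∑ a, f s a * M.p s a s' = ∑ s, ∑ a, f s a := by
  rw [← sum_comm_cycle]
  simp [← mul_sum, M.p_sum]

variable {M : MDP S A} {π π' : S → A → ℝ} {μ : S → ℝ}

theorem isDist_stateDistFrom (hπ : IsPolicy π) (hμ : IsDist μ) (t : ℕ) :
    IsDist (stateDistFrom M π μ t) := by
  induction t with
  | zero => exact hμ
  | succ t ih =>
    refine ⟨fun s' => sum_nonneg fun s _ => sum_nonneg fun a _ =>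
      mul_nonneg (mul_nonneg (ih.1 s) (hπ.1 s a)) (M.p_nonneg s a s'), ?_⟩
    simp only [stateDistFrom, M.sum_sum_sum_mul_p, ← mul_sum, hπ.2, mul_one, ih.2]

theorem summable_stateDistFrom (hπ : IsPolicy π) (hμ : IsDist μ) (s : S) :
    Summable fun t => M.γ ^ t * stateDistFrom M π μ t s := by
  have hγ := M.γ_pos.le
  refine (summable_geometric_of_lt_one hγ M.γ_lt_one).of_nonneg_of_le
    (fun t => mul_nonneg (pow_nonneg hγ t) ((isDist_stateDistFrom hπ hμ t).1 s)) fun t => ?_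
  exact mul_le_of_le_one_right (pow_nonneg hγ t) ((isDist_stateDistFrom hπ hμ t).le_one s)

theorem stateDistFrom_eq_sum_dirac [DecidableEq S] (M : MDP S A) (π : S → A → ℝ) (μ : S → ℝ)
    (t : ℕ) (s : S) :
    stateDistFrom M π μ t s =
      ∑ s₀, μ s₀ * stateDistFrom M π (fun s => if s = s₀ then 1 else 0) t s := by
  induction t generalizing s with
  | zero => simp [stateDistFrom]
  | succ t ih =>
    simp only [stateDistFrom, ih, sum_mul, mul_sum]
    rw [sum_comm_cycle]
    exact sum_congr rfl fun _ _ => sum_congr rfl fun _ _ => sum_congr rfl fun _ _ => by ring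

noncomputable def occupancy (M : MDP S A) (π : S → A → ℝ) (μ : S → ℝ) (s : S) : ℝ :=
  ∑' t, M.γ ^ t * stateDistFrom M π μ t s

theorem visitFrom_eq_mul_occupancy (M : MDP S A) (π : S → A → ℝ) (μ : S → ℝ) (s : S) :
    visitFrom M π μ s = (1 - M.γ) * occupancy M π μ s :=
  rfl

theorem occupancy_nonneg (hπ : IsPolicy π) (hμ : IsDist μ) (s : S) : 0 ≤ occupancy M π μ s :=
  tsum_nonneg fun t => mul_nonneg (pow_nonneg M.γ_pos.le t) ((isDist_stateDistFrom hπ hμ t).1 s)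

theorem occupancy_eq_add_sum (hπ : IsPolicy π) (hμ : IsDist μ) (s' : S) :
    occupancy M π μ s' = μ s' + M.γ * ∑ s, ∑ a, occupancy M π μ s * π s a * M.p s a s' := by
  have hsum : ∀ s a, Summable fun t =>
      M.γ ^ t * stateDistFrom M π μ t s * (π s a * M.p s a s') :=
    fun s a => (summable_stateDistFrom hπ hμ s).mul_right _
  rw [occupancy, (summable_stateDistFrom hπ hμ s').tsum_eq_zero_add]
  congr 1
  · simp [stateDistFrom]
  calc ∑' t, M.γ ^ (t + 1) * stateDistFrom M π μ (t + 1) s'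
      = ∑' t, M.γ * ∑ s, ∑ a, M.γ ^ t * stateDistFrom M π μ t s * (π s a * M.p s a s') := by
        refine tsum_congr fun t => ?_
        simp only [stateDistFrom, pow_succ, mul_sum]
        exact sum_congr rfl fun _ _ => sum_congr rfl fun _ _ => by ring
    _ = M.γ * ∑ s, ∑ a, occupancy M π μ s * π s a * M.p s a s' := by
        rw [tsum_mul_left, Summable.tsum_finsetSum fun s _ => summable_sum fun a _ => hsum s a]
        refine congrArg _ (sum_congr rfl fun s _ => ?_)
        rw [Summable.tsum_finsetSum fun a _ => hsum s a]
        exact sum_congr rfl fun a _ => by rw [tsum_mul_right, occupancy, mul_assoc]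

theorem occupancy_eq_sum_dirac [DecidableEq S] (hπ : IsPolicy π) (μ : S → ℝ) (s : S) :
    occupancy M π μ s =
      ∑ s₀, μ s₀ * occupancy M π (fun s => if s = s₀ then 1 else 0) s := by
  simp only [occupancy, stateDistFrom_eq_sum_dirac M π μ _ s, mul_sum]
  rw [Summable.tsum_finsetSum fun s₀ _ =>
    ((summable_stateDistFrom hπ (isDist_dirac s₀) s).mul_left (μ s₀)).congr fun t => by ring]
  exact sum_congr rfl fun s₀ _ => by rw [← tsum_mul_left]; exact tsum_congr fun t => by ring

theorem Jfrom_eq_sum_occupancy (hπ : IsPolicy π) (hμ : IsDist μ) :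
    Jfrom M π μ = ∑ s, occupancy M π μ s * ∑ a, π s a * M.r s a := by
  have hsum : ∀ s, Summable fun t =>
      M.γ ^ t * stateDistFrom M π μ t s * ∑ a, π s a * M.r s a :=
    fun s => (summable_stateDistFrom hπ hμ s).mul_right _
  calc Jfrom M π μ = ∑' t, ∑ s, M.γ ^ t * stateDistFrom M π μ t s * ∑ a, π s a * M.r s a := by
        refine tsum_congr fun t => ?_
        simp only [mul_sum]
        exact sum_congr rfl fun _ _ => sum_congr rfl fun _ _ => by ring
    _ = _ := by
        rw [Summable.tsum_finsetSum fun s _ => hsum s]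
        simp only [tsum_mul_right, occupancy]

theorem Jfrom_eq_sum_mul_Vval [DecidableEq S] (hπ : IsPolicy π) (hμ : IsDist μ) :
    Jfrom M π μ = ∑ s₀, μ s₀ * Vval M π s₀ := by
  calc Jfrom M π μ = ∑ s, ∑ s₀, μ s₀ * occupancy M π (fun s => if s = s₀ then 1 else 0) s *
        ∑ a, π s a * M.r s a := by
        rw [Jfrom_eq_sum_occupancy hπ hμ]
        exact sum_congr rfl fun s _ => by rw [occupancy_eq_sum_dirac hπ μ s, sum_mul]
    _ = ∑ s₀, μ s₀ * Vval M π s₀ := by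
        rw [sum_comm]
        refine sum_congr rfl fun s₀ _ => ?_
        rw [Vval, Jfrom_eq_sum_occupancy hπ (isDist_dirac s₀), mul_sum]
        exact sum_congr rfl fun _ _ => mul_assoc _ _ _

theorem Jfrom_sub_Jfrom_eq_sum_occupancy_mul_Adv [DecidableEq S] (hπ : IsPolicy π)
    (hπ' : IsPolicy π') (hμ : IsDist μ) :
    Jfrom M π μ - Jfrom M π' μ = ∑ s, occupancy M π μ s * ∑ a, π s a * Adv M π' s a := by
  set V := Vval M π'
  have hnext : ∑ s, occupancy M π μ s * ∑ a, π s a * (M.γ * ∑ s', M.p s a s' * V s') =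
      ∑ s', (occupancy M π μ s' - μ s') * V s' := by
    calc _ = ∑ s', (M.γ * ∑ s, ∑ a, occupancy M π μ s * π s a * M.p s a s') * V s' := by
          simp only [mul_sum, sum_mul]
          rw [sum_comm_cycle]
          exact sum_congr rfl fun _ _ => sum_congr rfl fun _ _ => sum_congr rfl fun _ _ => by ring
      _ = _ := sum_congr rfl fun s' _ => by
          rw [occupancy_eq_add_sum hπ hμ s', add_sub_cancel_left]
  have hAdv : ∀ s, ∑ a, π s a * Adv M π' s a =
      ∑ a, π s a * M.r s a + ∑ a, π s a * (M.γ * ∑ s', M.p s a s' * V s') - V s := by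
    intro s
    simp only [Adv, Qval, mul_sub, mul_add, sum_sub_distrib, sum_add_distrib, ← sum_mul, hπ.2,
      one_mul, V]
  rw [Jfrom_eq_sum_occupancy hπ hμ, Jfrom_eq_sum_mul_Vval hπ' hμ]
  simp only [hAdv, mul_sub, mul_add, sum_sub_distrib, sum_add_distrib, hnext, sub_mul]
  ring

theorem one_sub_γ_mul_sum_abs_occupancy_sub_le (hπ : IsPolicy π) (hπ' : IsPolicy π')
    (hμ : IsDist μ) :
    (1 - M.γ) * ∑ s, |occupancy M π μ s - occupancy M π' μ s| ≤
      M.γ * ∑ s, occupancy M π' μ s * ∑ a, |π s a - π' s a| := by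
  set δ := fun s => occupancy M π μ s - occupancy M π' μ s
  set d' := occupancy M π' μ
  have hδ : ∀ s',
      δ s' = M.γ * ∑ s, ∑ a, (δ s * π s a + d' s * (π s a - π' s a)) * M.p s a s' := by
    intro s'
    simp only [δ, d', occupancy_eq_add_sum hπ hμ s', occupancy_eq_add_sum hπ' hμ s', add_mul,
      sub_mul, mul_sub, sum_add_distrib, sum_sub_distrib]
    ring
  have hstep : ∀ s', |δ s'| ≤
      M.γ * ∑ s, ∑ a, (|δ s| * π s a + d' s * |π s a - π' s a|) * M.p s a s' := by
    intro s'
    rw [hδ s', abs_mul, abs_of_pos M.γ_pos]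
    refine mul_le_mul_of_nonneg_left ?_ M.γ_pos.le
    refine (abs_sum_le_sum_abs _ _).trans (sum_le_sum fun s _ => ?_)
    refine (abs_sum_le_sum_abs _ _).trans (sum_le_sum fun a _ => ?_)
    rw [abs_mul, abs_of_nonneg (M.p_nonneg s a s')]
    refine mul_le_mul_of_nonneg_right ((abs_add_le _ _).trans_eq ?_) (M.p_nonneg s a s')
    rw [abs_mul, abs_mul, abs_of_nonneg (hπ.1 s a), abs_of_nonneg (occupancy_nonneg hπ' hμ s)]
  have hsum := sum_le_sum fun s' (_ : s' ∈ univ) => hstep s'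
  rw [← mul_sum, M.sum_sum_sum_mul_p] at hsum
  simp only [sum_add_distrib, ← mul_sum, hπ.2, mul_one] at hsum
  linarith

theorem Jfrom_sub_Jfrom_ge_occupancy_bound [DecidableEq S] {πk : S → A → ℝ} (hπ : IsPolicy π)
    (hπk : IsPolicy πk) (hπ' : IsPolicy π') (hμ : IsDist μ) :
    Jfrom M π μ - Jfrom M πk μ ≥
      ∑ s, occupancy M π' μ s * ∑ a, π s a * Adv M πk s a
        - M.γ * (⨆ s, |∑ a, π s a * Adv M πk s a|) / (1 - M.γ) *
          ∑ s, occupancy M π' μ s * ∑ a, |π s a - π' s a| := by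
  set Ā := fun s => ∑ a, π s a * Adv M πk s a
  set C := ⨆ s, |Ā s|
  have hC : ∀ s, |Ā s| ≤ C := le_ciSup (Finite.bddAbove_range _)
  have hC₀ : 0 ≤ C := Real.iSup_nonneg fun s => abs_nonneg _
  have hγ : 0 < 1 - M.γ := sub_pos.2 M.γ_lt_one
  have hshift : ∑ s, occupancy M π' μ s * Ā s - ∑ s, occupancy M π μ s * Ā s ≤
      C * ∑ s, |occupancy M π μ s - occupancy M π' μ s| := by
    rw [← sum_sub_distrib, mul_sum]
    refine sum_le_sum fun s _ => ?_
    calc occupancy M π' μ s * Ā s - occupancy M π μ s * Ā s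
        = (occupancy M π' μ s - occupancy M π μ s) * Ā s := (sub_mul _ _ _).symm
      _ ≤ |occupancy M π' μ s - occupancy M π μ s| * |Ā s| :=
          (le_abs_self _).trans_eq (abs_mul _ _)
      _ ≤ C * |occupancy M π μ s - occupancy M π' μ s| := by
          rw [abs_sub_comm, mul_comm]; exact mul_le_mul_of_nonneg_right (hC s) (abs_nonneg _)
  have hl1 :=
    mul_le_mul_of_nonneg_left (one_sub_γ_mul_sum_abs_occupancy_sub_le (M := M) hπ hπ' hμ) hC₀
  rw [ge_iff_le, Jfrom_sub_Jfrom_eq_sum_occupancy_mul_Adv hπ hπk hμ, sub_le_comm,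
    div_mul_eq_mul_div, le_div_iff₀ hγ]
  nlinarith [mul_le_mul_of_nonneg_right hshift hγ.le]

theorem Jfrom_sub_Jfrom_ge_visitFrom_bound [DecidableEq S] {πk : S → A → ℝ} (hπ : IsPolicy π)
    (hπk : IsPolicy πk) (hπ' : IsPolicy π') (hμ : IsDist μ) :
    Jfrom M π μ - Jfrom M πk μ ≥
      (1 / (1 - M.γ)) * ∑ s, visitFrom M π' μ s * ∑ a, π s a * Adv M πk s a
        - (2 * M.γ * (⨆ s, |∑ a, π s a * Adv M πk s a|) / (1 - M.γ) ^ 2) *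
          ∑ s, visitFrom M π' μ s * tvPol π π' s := by
  have hγ : 1 - M.γ ≠ 0 := (sub_pos.2 M.γ_lt_one).ne'
  convert Jfrom_sub_Jfrom_ge_occupancy_bound hπ hπk hπ' hμ using 2
  · simp only [visitFrom_eq_mul_occupancy, mul_assoc, ← mul_sum]
    field_simp
  · simp only [visitFrom_eq_mul_occupancy, tvPol, mul_assoc, ← mul_sum]
    field_simp
    rw [← sum_div]
    ring

theorem sum_mul_div_mul_eq_sum_mul {ι K : Type*} [Field K] (s : Finset ι) {p q : ι → K}
    (f : ι → K) (h : ∀ i ∈ s, p i ≠ 0 → q i ≠ 0) :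
    ∑ i ∈ s, q i * (p i / q i * f i) = ∑ i ∈ s, p i * f i := by
  refine sum_congr rfl fun i hi => ?_
  by_cases hq : q i = 0
  · have hp : p i = 0 := not_imp_not.1 (h i hi) hq
    simp [hp, hq]
  · field_simp

theorem Jfrom_sub_Jfrom_ge_importance_weighted_bound [DecidableEq S] {πk : S → A → ℝ}
    (hπ : IsPolicy π) (hπk : IsPolicy πk) (hπ' : IsPolicy π') (hμ : IsDist μ)
    (hsupp : ∀ s a, π s a ≠ 0 → π' s a ≠ 0) :
    Jfrom M π μ - Jfrom M πk μ ≥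
      (1 / (1 - M.γ)) *
          ∑ s, ∑ a, (visitFrom M π' μ s * π' s a) * ((π s a / π' s a) * Adv M πk s a)
        - (2 * M.γ * (⨆ s, |∑ a, π s a * Adv M πk s a|) / (1 - M.γ) ^ 2) *
          ∑ s, visitFrom M π' μ s * tvPol π π' s := by
  have hIS : ∀ s, ∑ a, (visitFrom M π' μ s * π' s a) * ((π s a / π' s a) * Adv M πk s a) =
      visitFrom M π' μ s * ∑ a, π s a * Adv M πk s a := fun s => by
    simp only [mul_assoc, ← mul_sum]
    rw [sum_mul_div_mul_eq_sum_mul _ _ fun a _ => hsupp s a]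
  simp only [hIS]
  exact Jfrom_sub_Jfrom_ge_visitFrom_bound hπ hπk hπ' hμ

theorem sum_mul_le_of_sum_eq_one {ι : Type*} {s : Finset ι} {ν f : ι → ℝ} {c : ℝ}
    (hν₀ : ∀ i ∈ s, 0 ≤ ν i) (hν₁ : ∑ i ∈ s, ν i = 1) (hf : ∀ i ∈ s, f i ≤ c) :
    ∑ i ∈ s, ν i * f i ≤ c :=
  calc ∑ i ∈ s, ν i * f i ≤ ∑ i ∈ s, ν i * c :=
        sum_le_sum fun i hi => mul_le_mul_of_nonneg_left (hf i hi) (hν₀ i hi)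
    _ = c := by rw [← sum_mul, hν₁, one_mul]

theorem generalized_policy_improvement_lower_bound_general [DecidableEq S]
    (M : MDP S A) (Mp : ℕ)
    (π πk : S → A → ℝ) (πp : ℕ → S → A → ℝ)
    (hπ : IsPolicy π) (hπk : IsPolicy πk)
    (hπp : ∀ i < Mp, IsPolicy (πp i))
    (ν : ℕ → ℝ) (hν0 : ∀ i, 0 ≤ ν i) (hν1 : ∑ i ∈ Finset.range Mp, ν i = 1)
    (hsupp : ∀ i < Mp, ∀ s a, π s a ≠ 0 → πp i s a ≠ 0) :
    Jval M π - Jval M πk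
      ≥ (1 / (1 - M.γ)) *
          (∑ i ∈ Finset.range Mp, ν i *
            ∑ s, ∑ a, (visit M (πp i) s * πp i s a) * ((π s a / πp i s a) * Adv M πk s a))
        - (2 * M.γ * (⨆ s, |∑ a, π s a * Adv M πk s a|) / (1 - M.γ) ^ 2) *
            ∑ i ∈ Finset.range Mp, ν i * ∑ s, visit M (πp i) s * tvPol π (πp i) s := by
  have hρ0 : IsDist M.ρ0 := ⟨M.ρ0_nonneg, M.ρ0_sum⟩
  unfold visit
  rw [ge_iff_le, mul_sum, mul_sum, ← sum_sub_distrib]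
  refine le_trans (le_of_eq ?_) (sum_mul_le_of_sum_eq_one (fun i _ => hν0 i) hν1 fun i hi =>
    Jfrom_sub_Jfrom_ge_importance_weighted_bound hπ hπk (hπp i (mem_range.1 hi)) hρ0
      (hsupp i (mem_range.1 hi)))
  exact sum_congr rfl fun i _ => by ring

/-- Generalized policy improvement lower bound over `Mp` prior policies:
for prior policies `πp i`, `i = 0,…,Mp-1` with `πp 0 = π_k`, weights `ν`, and any future
policy `π` whose support is contained in that of every `πp i`,
`J(π) - J(π_k) ≥ (1/(1-γ)) E_{i∼ν} E_{(s,a)∼d^{πp i}}[(π/πp i) A^{π_k}]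
  - (2γ C^{π,π_k}/(1-γ)^2) E_{i∼ν} E_{s∼d^{πp i}}[TV(π, πp i)(s)]`. -/
theorem generalized_policy_improvement_lower_bound [DecidableEq S] [Nonempty S]
    (M : MDP S A) (Mp : ℕ) (hMp : 0 < Mp)
    (π πk : S → A → ℝ) (πp : ℕ → S → A → ℝ)
    (hπ : IsPolicy π) (hπk : IsPolicy πk)
    (hπp : ∀ i < Mp, IsPolicy (πp i)) (hπp0 : πp 0 = πk)
    (ν : ℕ → ℝ) (hν0 : ∀ i, 0 ≤ ν i) (hν1 : ∑ i ∈ Finset.range Mp, ν i = 1)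
    (hsupp : ∀ i < Mp, ∀ s a, π s a ≠ 0 → πp i s a ≠ 0) :
    Jval M π - Jval M πk
      ≥ (1 / (1 - M.γ)) *
          (∑ i ∈ Finset.range Mp, ν i *
            ∑ s, ∑ a, (visit M (πp i) s * πp i s a) * ((π s a / πp i s a) * Adv M πk s a))
        - (2 * M.γ * (⨆ s, |∑ a, π s a * Adv M πk s a|) / (1 - M.γ) ^ 2) *
            ∑ i ∈ Finset.range Mp, ν i * ∑ s, visit M (πp i) s * tvPol π (πp i) s :=
  generalized_policy_improvement_lower_bound_general M Mp π πk πp hπ hπk hπp ν hν0 hν1 hsupp
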